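/- The Kullback-Leibler divergence from the wrapped Cauchy distribution with concentration ρ ∈ [0,1) to the circular uniform distribution (ρ₀ = 0, same location) equals −log(1 − ρ²). -/

import Mathlib

open Real MeasureTheory

/-- Wrapped Cauchy density. -/
noncomputable def wcDensity (μ ρ x : ℝ) : ℝ :=
  (1 / (2 * Real.pi)) * ((1 - ρ^2) / (1 + ρ^2 - 2 * ρ * Real.cos (x - μ)))

/-!
On the unit circle, `2π` times the wrapped Cauchy density is the Poisson kernel `P_w` of the
point `w = ρ e^{iμ}`, so the divergence is the circle average of `P_w log P_w`. For `|z| = 1`,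
`log P_w(z) = log (1 - |w|²) - 2 log |1 - w̄ z|`, and the right-hand side is harmonic on a
neighbourhood of the closed disc. By the Poisson integral formula its `P_w`-average is its value
at `w`, namely `log (1 - |w|²) - 2 log (1 - |w|²) = -log (1 - |w|²)`.
-/

open Complex ComplexConjugate Metric InnerProductSpace

lemma norm_one_sub_conj_mul_eq_norm_sub {z : ℂ} (hz : ‖z‖ = 1) (w : ℂ) :
    ‖1 - conj w * z‖ = ‖z - w‖ := by
  have hzz : z * conj z = 1 := by
    rw [Complex.mul_conj', hz]; norm_num
  calc ‖1 - conj w * z‖ = ‖z * (conj z - conj w)‖ := by rw [mul_sub, hzz, mul_comm]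
    _ = ‖z - w‖ := by rw [norm_mul, hz, one_mul, ← map_sub, Complex.norm_conj]

lemma log_poissonKernel_zero {w z : ℂ} (hw : ‖w‖ < 1) (hz : ‖z‖ = 1) :
    Real.log (poissonKernel 0 w z) = Real.log (1 - ‖w‖ ^ 2) - 2 * Real.log ‖1 - conj w * z‖ := by
  have hzw : 0 < ‖z - w‖ := norm_pos_iff.mpr (sub_ne_zero.mpr (by rintro rfl; linarith))
  have hw2 : 0 < 1 - ‖w‖ ^ 2 := by nlinarith [norm_nonneg w]
  rw [poissonKernel_def, norm_one_sub_conj_mul_eq_norm_sub hz, sub_zero, sub_zero, hz,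
    one_pow, Real.log_div hw2.ne' (by positivity), Real.log_pow]
  push_cast
  ring

lemma harmonicOnNhd_log_norm_one_sub_conj_mul {w : ℂ} (hw : ‖w‖ < 1) :
    HarmonicOnNhd (fun z ↦ Real.log ‖1 - conj w * z‖) (closedBall 0 1) := by
  intro z hz
  refine AnalyticAt.harmonicAt_log_norm (by fun_prop) (sub_ne_zero.mpr fun h ↦ ?_)
  have : ‖conj w * z‖ < 1 := by
    rw [norm_mul, Complex.norm_conj]
    exact lt_of_le_of_lt (mul_le_of_le_one_right (norm_nonneg w) (by simpa using hz)) hw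
  rw [← h, norm_one] at this
  exact this.false

theorem circleAverage_poissonKernel_mul_log_poissonKernel {w : ℂ} (hw : ‖w‖ < 1) :
    Real.circleAverage (fun z ↦ poissonKernel 0 w z * Real.log (poissonKernel 0 w z)) 0 1
      = -Real.log (1 - ‖w‖ ^ 2) := by
  have harm : HarmonicOnNhd
      (fun z ↦ Real.log (1 - ‖w‖ ^ 2) - (2 : ℝ) • Real.log ‖1 - conj w * z‖) (closedBall 0 1) :=
    fun z hz ↦ (harmonicAt_const _).sub
      ((harmonicOnNhd_log_norm_one_sub_conj_mul hw z hz).const_smul)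
  have hconj : ‖1 - conj w * w‖ = 1 - ‖w‖ ^ 2 := by
    rw [Complex.conj_mul', ← Complex.ofReal_pow, ← Complex.ofReal_one, ← Complex.ofReal_sub,
      Complex.norm_real, Real.norm_eq_abs, abs_of_pos (by nlinarith [norm_nonneg w])]
  calc _ = Real.circleAverage (poissonKernel 0 w •
        fun z ↦ Real.log (1 - ‖w‖ ^ 2) - (2 : ℝ) • Real.log ‖1 - conj w * z‖) 0 1 := by
        refine circleAverage_congr_sphere fun z hz ↦ ?_
        rw [abs_one, mem_sphere_zero_iff_norm] at hz
        simp only [Pi.smul_apply', smul_eq_mul, log_poissonKernel_zero hw hz]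
    _ = _ := by
        rw [harm.circleAverage_poissonKernel_smul (mem_ball_zero_iff.mpr hw), hconj, smul_eq_mul]
        ring

lemma poissonKernel_circleMap (ρ μ x : ℝ) :
    poissonKernel 0 (circleMap 0 ρ μ) (circleMap 0 1 x)
      = (1 - ρ ^ 2) / (1 + ρ ^ 2 - 2 * ρ * Real.cos (x - μ)) := by
  rw [poissonKernel_def, sub_zero, sub_zero, norm_circleMap_zero, norm_circleMap_zero,
    abs_one, one_pow, sq_abs, ← Complex.normSq_eq_norm_sq, Complex.normSq_apply]
  simp only [circleMap, zero_add, Complex.sub_re, Complex.sub_im, Complex.re_ofReal_mul,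
    Complex.im_ofReal_mul, Complex.exp_ofReal_mul_I_re, Complex.exp_ofReal_mul_I_im,
    Complex.ofReal_one, one_mul, Real.cos_sub]
  congr 1
  nlinarith [Real.sin_sq_add_cos_sq x, Real.sin_sq_add_cos_sq μ]

theorem wrappedCauchy_KLD_uniform (μ ρ : ℝ) (h0 : 0 ≤ ρ) (h1 : ρ < 1) :
    ∫ x in (0:ℝ)..(2 * Real.pi),
        wcDensity μ ρ x * Real.log (wcDensity μ ρ x / (1 / (2 * Real.pi)))
      = -Real.log (1 - ρ^2) := by
  have hw : ‖circleMap 0 ρ μ‖ < 1 := by rwa [norm_circleMap_zero, abs_of_nonneg h0]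
  have key := circleAverage_poissonKernel_mul_log_poissonKernel hw
  rw [norm_circleMap_zero, sq_abs, Real.circleAverage_def, smul_eq_mul] at key
  rw [← key, ← intervalIntegral.integral_const_mul]
  congr 1 with x
  rw [wcDensity, poissonKernel_circleMap, mul_div_cancel_left₀ _ (by positivity)]
  ring
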